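/- arXiv:2512.12752 — 3 statements merged into one kernel-verified Lean document; each statement's English description precedes it below -/
import Mathlib

section
/- Let n be a positive integer and let A, W, Z be real n×n matrices such that A is invertible, W is symmetric positive semidefinite, and Z is positive semidefinite in the general (not necessarily symmetric) sense, i.e., xᵀ·Z·x ≥ 0 for all x ∈ ℝⁿ. Then the 2n×2n block matrix [[A, −W], [−Z, −Aᵀ]] is invertible; equivalently, for every right-hand side (B, C) ∈ ℝⁿ × ℝⁿ the system A·U − W·M = B, −Z·U − Aᵀ·M = C has a unique solution (U, M). -/
/-!
If `[[A, -W], [-Z, -Aᵀ]] (u, v) = 0` then `A u = W v` and `Aᵀ v = -Z u`, so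
`vᵀ W v = vᵀ A u = uᵀ Aᵀ v = -uᵀ Z u`. The left side is `≥ 0` and the right side `≤ 0`,
hence both vanish; positive semidefiniteness of `W` gives `W v = 0`, so `A u = 0`, and then
`Aᵀ v = -Z u = 0`. Invertibility of `A` forces `u = v = 0`, so the square block matrix has
trivial kernel.
-/

open Matrix

section BlockSystem

variable {α m n : Type*} [Fintype m] [Fintype n] [DecidableEq m] [DecidableEq n] [CommRing α]

theorem existsUnique_fromBlocks_mulVec_eq {P : Matrix m m α} {Q : Matrix m n α}
    {R : Matrix n m α} {S : Matrix n n α} (h : IsUnit (fromBlocks P Q R S))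
    (B : m → α) (C : n → α) :
    ∃! UM : (m → α) × (n → α), P *ᵥ UM.1 + Q *ᵥ UM.2 = B ∧ R *ᵥ UM.1 + S *ᵥ UM.2 = C := by
  have hbij : Function.Bijective (fromBlocks P Q R S).mulVec :=
    ⟨mulVec_injective_of_isUnit h, mulVec_surjective_iff_isUnit.mpr h⟩
  let e := (Equiv.sumArrowEquivProdArrow m n α).symm
  have hsys : ∀ UM, fromBlocks P Q R S *ᵥ e UM = Sum.elim B C ↔
      P *ᵥ UM.1 + Q *ᵥ UM.2 = B ∧ R *ᵥ UM.1 + S *ᵥ UM.2 = C := fun UM => by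
    rw [fromBlocks_mulVec, Sum.elim_eq_iff]
    rfl
  simpa only [Function.comp_apply, hsys] using
    (hbij.comp e.bijective).existsUnique (Sum.elim B C)

end BlockSystem

section Hamiltonian

variable {ι : Type*} [Fintype ι] [DecidableEq ι] {A W Z : Matrix ι ι ℝ}

theorem eq_zero_of_mulVec_eq_of_transpose_mulVec_eq_neg (hA : IsUnit A) (hW : W.PosSemidef)
    (hZ : ∀ x : ι → ℝ, 0 ≤ x ⬝ᵥ Z *ᵥ x) {u v : ι → ℝ}
    (huv : A *ᵥ u = W *ᵥ v) (hvu : Aᵀ *ᵥ v = -(Z *ᵥ u)) : u = 0 ∧ v = 0 := by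
  have hquad : v ⬝ᵥ W *ᵥ v = -(u ⬝ᵥ Z *ᵥ u) := by
    rw [← huv, dotProduct_mulVec, ← mulVec_transpose, hvu, neg_dotProduct, dotProduct_comm]
  have hWv : W *ᵥ v = 0 := by
    refine (hW.dotProduct_mulVec_zero_iff v).mp ?_
    have := hW.dotProduct_mulVec_nonneg v
    simp only [star_trivial] at this ⊢
    linarith [hZ u]
  have hu : u = 0 :=
    mulVec_injective_of_isUnit hA (by rw [huv, hWv, mulVec_zero])
  refine ⟨hu, mulVec_injective_of_isUnit ((isUnit_transpose A).mpr hA) ?_⟩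
  rw [hvu, hu, mulVec_zero, mulVec_zero, neg_zero]

theorem isUnit_fromBlocks_neg_transpose (hA : IsUnit A) (hW : W.PosSemidef)
    (hZ : ∀ x : ι → ℝ, 0 ≤ x ⬝ᵥ Z *ᵥ x) : IsUnit (fromBlocks A (-W) (-Z) (-Aᵀ)) := by
  refine mulVec_injective_iff_isUnit.mp ((injective_iff_map_eq_zero (mulVecLin _)).mpr ?_)
  intro x hx
  rw [mulVecLin_apply, fromBlocks_mulVec, ← Sum.elim_zero_zero, Sum.elim_eq_iff,
    neg_mulVec, neg_mulVec, neg_mulVec, add_neg_eq_zero, neg_add_eq_zero] at hx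
  obtain ⟨hu, hv⟩ := eq_zero_of_mulVec_eq_of_transpose_mulVec_eq_neg hA hW hZ hx.1
    (neg_eq_iff_eq_neg.mp hx.2.symm)
  rw [← Sum.elim_comp_inl_inr x, hu, hv, Sum.elim_zero_zero]

end Hamiltonian

theorem stmt_1_general (n : ℕ)
    (A W Z : Matrix (Fin n) (Fin n) ℝ)
    (hA : IsUnit A)
    (hW : W.PosSemidef)
    (hZ : ∀ x : Fin n → ℝ, 0 ≤ x ⬝ᵥ Z.mulVec x) :
    IsUnit (Matrix.fromBlocks A (-W) (-Z) (-Aᵀ)) ∧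
      ∀ B C : Fin n → ℝ, ∃! UM : (Fin n → ℝ) × (Fin n → ℝ),
        A.mulVec UM.1 - W.mulVec UM.2 = B ∧
        -(Z.mulVec UM.1) - Aᵀ.mulVec UM.2 = C := by
  have hunit := isUnit_fromBlocks_neg_transpose hA hW hZ
  refine ⟨hunit, fun B C => ?_⟩
  simpa only [neg_mulVec, sub_eq_add_neg] using existsUnique_fromBlocks_mulVec_eq hunit B C

/-- If `A` is invertible, `W` is symmetric positive semidefinite, and `Z` satisfies
`xᵀ·Z·x ≥ 0` for all `x`, then the block matrix `[[A, −W], [−Z, −Aᵀ]]` is invertible;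
equivalently, for every right-hand side `(B, C)` the system `A·U − W·M = B`,
`−Z·U − Aᵀ·M = C` has a unique solution `(U, M)`. -/
theorem stmt_1 (n : ℕ) (hn : 0 < n)
    (A W Z : Matrix (Fin n) (Fin n) ℝ)
    (hA : IsUnit A)
    (hW : W.PosSemidef)
    (hZ : ∀ x : Fin n → ℝ, 0 ≤ x ⬝ᵥ Z.mulVec x) :
    IsUnit (Matrix.fromBlocks A (-W) (-Z) (-Aᵀ)) ∧
      ∀ B C : Fin n → ℝ, ∃! UM : (Fin n → ℝ) × (Fin n → ℝ),
        A.mulVec UM.1 - W.mulVec UM.2 = B ∧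
        -(Z.mulVec UM.1) - Aᵀ.mulVec UM.2 = C :=
  stmt_1_general n A W Z hA hW hZ
end

section
/- Let n be a positive integer and let A, W, Z be real n×n matrices such that xᵀ·W·x > 0 and xᵀ·Z·x > 0 for every nonzero x ∈ ℝⁿ (positive definiteness in the general, not necessarily symmetric, sense), with A arbitrary. Then the 2n×2n block matrix [[A, −W], [−Z, −Aᵀ]] is invertible. -/
open Matrix

/-- If `xᵀ·W·x > 0` and `xᵀ·Z·x > 0` for every nonzero `x` (positive definiteness in the
general, not necessarily symmetric, sense), with `A` arbitrary, then the block matrix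
`[[A, −W], [−Z, −Aᵀ]]` is invertible. -/
theorem stmt_2 (n : ℕ) (hn : 0 < n)
    (A W Z : Matrix (Fin n) (Fin n) ℝ)
    (hW : ∀ x : Fin n → ℝ, x ≠ 0 → 0 < x ⬝ᵥ W.mulVec x)
    (hZ : ∀ x : Fin n → ℝ, x ≠ 0 → 0 < x ⬝ᵥ Z.mulVec x) :
    IsUnit (Matrix.fromBlocks A (-W) (-Z) (-Aᵀ)) := by
  rw [← Matrix.mulVec_injective_iff_isUnit, ← Matrix.coe_mulVecLin,
    ← LinearMap.ker_eq_bot, LinearMap.ker_eq_bot']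
  intro p hp
  set x : Fin n → ℝ := p ∘ Sum.inl with hx
  set y : Fin n → ℝ := p ∘ Sum.inr with hy
  have hp' : Matrix.fromBlocks A (-W) (-Z) (-Aᵀ) *ᵥ p = 0 := hp
  rw [Matrix.fromBlocks_mulVec] at hp'
  have h1 : A *ᵥ x + (-W) *ᵥ y = 0 := by
    have := congrFun hp' (Sum.inl ⟨0, hn⟩)
    funext i; have := congrFun hp' (Sum.inl i); simpa using this
  have h2 : (-Z) *ᵥ x + (-Aᵀ) *ᵥ y = 0 := by
    funext i; have := congrFun hp' (Sum.inr i); simpa using this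
  have hAx : A *ᵥ x = W *ᵥ y := by
    have := h1
    rw [Matrix.neg_mulVec, ← sub_eq_add_neg, sub_eq_zero] at this
    exact this
  have hZx : Z *ᵥ x = -(Aᵀ *ᵥ y) := by
    have := h2
    rw [Matrix.neg_mulVec, Matrix.neg_mulVec, ← neg_add, neg_eq_zero] at this
    exact eq_neg_of_add_eq_zero_left this
  have key : x ⬝ᵥ Z *ᵥ x + y ⬝ᵥ W *ᵥ y = 0 := by
    have hswap : y ⬝ᵥ A *ᵥ x = x ⬝ᵥ Aᵀ *ᵥ y := by
      rw [Matrix.dotProduct_mulVec, ← Matrix.mulVec_transpose, dotProduct_comm]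
    rw [← hAx, hZx, dotProduct_neg, hswap]
    ring
  have hxz : x = 0 := by
    by_contra hx0
    have h1 := hZ x hx0
    have h2 : 0 ≤ y ⬝ᵥ W *ᵥ y := by
      rcases eq_or_ne y 0 with h | h
      · simp [h]
      · exact (hW y h).le
    linarith
  have hyz : y = 0 := by
    by_contra hy0
    have h1 := hW y hy0
    have h2 : 0 ≤ x ⬝ᵥ Z *ᵥ x := by
      rcases eq_or_ne x 0 with h | h
      · simp [h]
      · exact (hZ x h).le
    linarith
  funext i
  cases i with
  | inl i => exact congrFun hxz i
  | inr i => exact congrFun hyz i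
end

section
/- Let σ > 0, R > 0, K > 0, and let φ : ℝ² → ℝ be of class C⁴ with all iterated derivatives of order up to 4 bounded by K. Let e¹ = (1,0), e² = (−1,0), e³ = (0,1), e⁴ = (0,−1). Then there exists a constant C > 0 (depending only on K, σ, R) such that for every x ∈ ℝ², every q ∈ ℝ² with |q| ≤ R, and every Δt ∈ (0,1]: |(1/4)·∑_{ℓ=1}^{4} φ(x + Δt·q + √(2Δt)·σ·e^ℓ) − φ(x) − Δt·((σ²/2)·Δφ(x) + q·∇φ(x))| ≤ C·(Δt)², where Δφ = ∂²φ/∂x₁² + ∂²φ/∂x₂² and ∇φ is the gradient of φ. -/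
/-!
Expand `φ` to third order around the transported point `y = x + Δt q`. The four stencil
vectors come in opposite pairs, so the odd-order terms cancel and the mean of the Taylor
polynomials is `φ y + (s² / 4) Δφ y` with `s = √(2Δt) σ`, i.e. `s² / 4 = Δt σ² / 2`; the
fourth-order remainders are `O(s⁴) = O(Δt²)`. Going back from `y` to `x` costs
`φ y - φ x - Δt q·∇φ x = O(Δt²)` (second-order Taylor) and `Δφ y - Δφ x = O(Δt)` (bounded third
derivatives), the latter multiplied by `Δt`.
-/

/-- The four unit displacement vectors `e¹ = (1,0)`, `e² = (−1,0)`, `e³ = (0,1)`,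
`e⁴ = (0,−1)` of the four-point semi-Lagrangian quadrature. -/
noncomputable def eVec : Fin 4 → ℝ × ℝ := ![(1, 0), (-1, 0), (0, 1), (0, -1)]

open Finset

section

variable {E F : Type*} [NormedAddCommGroup E] [NormedSpace ℝ E]
  [NormedAddCommGroup F] [NormedSpace ℝ F]

theorem ContinuousMultilinearMap.map_fun_const_smul {n : ℕ}
    (A : ContinuousMultilinearMap ℝ (fun _ : Fin n => E) F) (c : ℝ) (v : E) :
    A (fun _ => c • v) = c ^ n • A (fun _ => v) := by
  simpa using A.map_smul_univ (fun _ => c) (fun _ => v)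

theorem iteratedDeriv_comp_add_smul {f : E → F} {n : WithTop ℕ∞} (hf : ContDiff ℝ n f)
    {k : ℕ} (hk : k ≤ n) (y v : E) (t : ℝ) :
    iteratedDeriv k (fun t : ℝ => f (y + t • v)) t =
      iteratedFDeriv ℝ k f (y + t • v) (fun _ => v) := by
  have hcomp : (fun t : ℝ => f (y + t • v)) =
      (fun z => f (y + z)) ∘ ContinuousLinearMap.toSpanSingleton ℝ v := rfl
  rw [iteratedDeriv_eq_iteratedFDeriv, hcomp,
    ContinuousLinearMap.iteratedFDeriv_comp_right (f := fun z => f (y + z)) _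
      (hf.comp (contDiff_const.add contDiff_id)) _ hk,
    ContinuousMultilinearMap.compContinuousLinearMap_apply, iteratedFDeriv_comp_add_left]
  simp

noncomputable def taylorPoly (f : E → F) (y : E) (n : ℕ) (v : E) : F :=
  ∑ k ∈ range (n + 1), (k.factorial : ℝ)⁻¹ • iteratedFDeriv ℝ k f y (fun _ => v)

theorem taylorPoly_one (f : E → F) (y v : E) :
    taylorPoly f y 1 v = f y + fderiv ℝ f y v := by
  simp [taylorPoly, sum_range_succ]

theorem taylorPoly_three_add_neg (f : E → F) (y v : E) :
    taylorPoly f y 3 v + taylorPoly f y 3 (-v) =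
      (2 : ℝ) • f y + iteratedFDeriv ℝ 2 f y (fun _ => v) := by
  simp only [taylorPoly, sum_range_succ, range_zero, sum_empty, ← neg_one_smul ℝ v,
    ContinuousMultilinearMap.map_fun_const_smul, iteratedFDeriv_zero_apply, Nat.factorial]
  module

theorem norm_sub_taylorPoly_le {f : E → F} {n : ℕ} {M : ℝ} (hf : ContDiff ℝ (n + 1) f)
    (hM : ∀ z, ‖iteratedFDeriv ℝ (n + 1) f z‖ ≤ M) (y v : E) :
    ‖f (y + v) - taylorPoly f y n v‖ ≤ M * ‖v‖ ^ (n + 1) / n.factorial := by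
  set g : ℝ → F := fun t => f (y + t • v)
  have hg : ContDiff ℝ (n + 1) g := hf.comp (contDiff_const.add (contDiff_id.smul contDiff_const))
  have hderiv : ∀ k ≤ n + 1, ∀ t ∈ Set.Icc (0 : ℝ) 1,
      iteratedDerivWithin k g (Set.Icc 0 1) t = iteratedFDeriv ℝ k f (y + t • v) (fun _ => v) :=
    fun k hk t ht => by
      rw [iteratedDerivWithin_eq_iteratedDeriv (uniqueDiffOn_Icc one_pos)
        (hg.contDiffAt.of_le (by exact_mod_cast hk)) ht,
        iteratedDeriv_comp_add_smul hf (by exact_mod_cast hk)]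
  have hbound : ∀ t ∈ Set.Icc (0 : ℝ) 1,
      ‖iteratedDerivWithin (n + 1) g (Set.Icc 0 1) t‖ ≤ M * ‖v‖ ^ (n + 1) := fun t ht => by
    rw [hderiv _ le_rfl t ht]
    exact (ContinuousMultilinearMap.le_opNorm_mul_pow_of_le _ (pi_norm_const_le v)).trans
      (by gcongr; exact hM _)
  have htaylor : taylorWithinEval g n (Set.Icc 0 1) 0 1 = taylorPoly f y n v := by
    rw [taylor_within_apply]
    refine sum_congr rfl fun k hk => ?_
    rw [hderiv k (by rw [mem_range] at hk; omega) 0 (by simp)]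
    simp
  simpa [g, htaylor] using taylor_mean_remainder_bound zero_le_one hg.contDiffOn
    (Set.right_mem_Icc.2 zero_le_one) hbound

theorem norm_sub_sub_fderiv_le {f : E → F} {M : ℝ} (hf : ContDiff ℝ 2 f)
    (hM : ∀ z, ‖iteratedFDeriv ℝ 2 f z‖ ≤ M) (x h : E) :
    ‖f (x + h) - f x - fderiv ℝ f x h‖ ≤ M * ‖h‖ ^ 2 := by
  simpa [taylorPoly_one, sub_sub] using norm_sub_taylorPoly_le (n := 1) hf hM x h

theorem norm_iteratedFDeriv_apply_sub_le {f : E → F} {k : ℕ} {M : ℝ}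
    (hf : ContDiff ℝ (k + 1) f) (hM : ∀ z, ‖iteratedFDeriv ℝ (k + 1) f z‖ ≤ M) (x y u : E) :
    ‖iteratedFDeriv ℝ k f y (fun _ => u) - iteratedFDeriv ℝ k f x (fun _ => u)‖ ≤
      M * ‖y - x‖ * ‖u‖ ^ k := by
  have hlip : ‖iteratedFDeriv ℝ k f y - iteratedFDeriv ℝ k f x‖ ≤ M * ‖y - x‖ :=
    convex_univ.norm_image_sub_le_of_norm_fderiv_le
      (fun z _ => hf.differentiable_iteratedFDeriv (by exact_mod_cast lt_add_one k) z)
      (fun z _ => norm_fderiv_iteratedFDeriv.trans_le (hM z)) (Set.mem_univ x) (Set.mem_univ y)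
  exact ContinuousMultilinearMap.le_of_opNorm_le hlip _ |>.trans_eq (by simp)

noncomputable def planeLaplacian (f : ℝ × ℝ → F) (x : ℝ × ℝ) : F :=
  iteratedFDeriv ℝ 2 f x ![(1, 0), (1, 0)] + iteratedFDeriv ℝ 2 f x ![(0, 1), (0, 1)]

theorem planeLaplacian_eq (f : ℝ × ℝ → F) (x : ℝ × ℝ) :
    planeLaplacian f x =
      iteratedFDeriv ℝ 2 f x (fun _ => (1, 0)) + iteratedFDeriv ℝ 2 f x (fun _ => (0, 1)) := by
  have hdiag : ∀ u : ℝ × ℝ, ![u, u] = fun _ => u := fun u => by funext i; fin_cases i <;> rfl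
  rw [planeLaplacian, hdiag, hdiag]

theorem norm_planeLaplacian_sub_le {f : ℝ × ℝ → F} {M : ℝ} (hf : ContDiff ℝ 3 f) (hM : ∀ z, ‖iteratedFDeriv ℝ 3 f z‖ ≤ M)
    (x y : ℝ × ℝ) : ‖planeLaplacian f y - planeLaplacian f x‖ ≤ 2 * M * ‖y - x‖ := by
  have h₁ := norm_iteratedFDeriv_apply_sub_le (k := 2) hf hM x y (1, 0)
  have h₂ := norm_iteratedFDeriv_apply_sub_le (k := 2) hf hM x y (0, 1)
  simp only [Prod.norm_mk, norm_one, norm_zero, max_eq_left zero_le_one,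
    max_eq_right zero_le_one, one_pow, mul_one] at h₁ h₂
  rw [planeLaplacian_eq, planeLaplacian_eq, add_sub_add_comm]
  calc _ ≤ _ := norm_add_le _ _
    _ ≤ M * ‖y - x‖ + M * ‖y - x‖ := add_le_add h₁ h₂
    _ = 2 * M * ‖y - x‖ := by ring

theorem sum_taylorPoly_smul_eVec (f : ℝ × ℝ → F) (y : ℝ × ℝ) (s : ℝ) :
    ∑ ℓ, taylorPoly f y 3 (s • eVec ℓ) = (4 : ℝ) • f y + s ^ 2 • planeLaplacian f y := by
  have h1 : eVec 1 = -eVec 0 := by simp [eVec]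
  have h3 : eVec 3 = -eVec 2 := by simp [eVec]
  rw [Fin.sum_univ_four, h1, h3, smul_neg, smul_neg, add_assoc, taylorPoly_three_add_neg,
    taylorPoly_three_add_neg, ContinuousMultilinearMap.map_fun_const_smul,
    ContinuousMultilinearMap.map_fun_const_smul, planeLaplacian_eq,
    show eVec 0 = (1, 0) from rfl, show eVec 2 = (0, 1) from rfl]
  module

theorem abs_mean_eVec_sub_le {φ : ℝ × ℝ → ℝ} {K : ℝ} (hφ : ContDiff ℝ 4 φ)
    (hK : ∀ z, ‖iteratedFDeriv ℝ 4 φ z‖ ≤ K) (y : ℝ × ℝ) (s : ℝ) :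
    |(1 / 4) * ∑ ℓ, φ (y + s • eVec ℓ) - φ y - s ^ 2 / 4 * planeLaplacian φ y| ≤ K * s ^ 4 / 6 := by
  have hrem : ∀ ℓ, |φ (y + s • eVec ℓ) - taylorPoly φ y 3 (s • eVec ℓ)| ≤ K * s ^ 4 / 6 := by
    intro ℓ
    have hnorm : ‖s • eVec ℓ‖ = |s| := by
      rw [norm_smul, Real.norm_eq_abs]
      fin_cases ℓ <;> simp [eVec, Prod.norm_def]
    have h := norm_sub_taylorPoly_le (n := 3) hφ hK y (s • eVec ℓ)
    rw [hnorm, Real.norm_eq_abs, (by decide : Even (3 + 1)).pow_abs] at h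
    simpa [Nat.factorial] using h
  have hsum := sum_taylorPoly_smul_eVec φ y s
  simp only [smul_eq_mul] at hsum
  calc _ = |(1 / 4) * ∑ ℓ, (φ (y + s • eVec ℓ) - taylorPoly φ y 3 (s • eVec ℓ))| := by
        rw [sum_sub_distrib, hsum]; ring_nf
    _ ≤ (1 / 4) * ∑ _ℓ : Fin 4, K * s ^ 4 / 6 := by
        rw [abs_mul, abs_of_pos (by norm_num : (0 : ℝ) < 1 / 4)]
        gcongr
        exact (abs_sum_le_sum_abs _ _).trans (sum_le_sum fun ℓ _ => hrem ℓ)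
    _ = K * s ^ 4 / 6 := by simp

end

theorem stmt_8_general (σ R K : ℝ) (hR : 0 < R) (hK : 0 < K)
    (φ : ℝ × ℝ → ℝ) (hφ : ContDiff ℝ 4 φ)
    (hbd : ∀ k : ℕ, k ≤ 4 → ∀ x : ℝ × ℝ, ‖iteratedFDeriv ℝ k φ x‖ ≤ K) :
    ∃ C > 0, ∀ (x q : ℝ × ℝ) (Δt : ℝ), ‖q‖ ≤ R → 0 < Δt → Δt ≤ 1 →
      |(1 / 4) * ∑ ℓ : Fin 4, φ (x + Δt • q + (Real.sqrt (2 * Δt) * σ) • eVec ℓ)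
          - φ x
          - Δt * ((σ ^ 2 / 2) *
                (iteratedFDeriv ℝ 2 φ x ![(1, 0), (1, 0)] +
                  iteratedFDeriv ℝ 2 φ x ![(0, 1), (0, 1)]) +
              fderiv ℝ φ x q)| ≤ C * Δt ^ 2 := by
  refine ⟨K * (2 * σ ^ 4 / 3 + R ^ 2 + R * σ ^ 2), by positivity, fun x q Δt hq hΔt _ => ?_⟩
  set s := Real.sqrt (2 * Δt) * σ
  set y := x + Δt • q
  have hs2 : s ^ 2 = 2 * Δt * σ ^ 2 := by rw [mul_pow, Real.sq_sqrt (by positivity)]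
  have hstep : ‖y - x‖ ≤ Δt * R := by
    rw [add_sub_cancel_left, norm_smul, Real.norm_of_nonneg hΔt.le]; gcongr
  have hdiffusion := abs_mean_eVec_sub_le hφ (hbd 4 le_rfl) y s
  have hdrift : |φ y - φ x - Δt * fderiv ℝ φ x q| ≤ K * (Δt * R) ^ 2 := by
    have h := norm_sub_sub_fderiv_le (hφ.of_le (by norm_num)) (hbd 2 (by norm_num)) x (Δt • q)
    rw [map_smul, smul_eq_mul, Real.norm_eq_abs] at h
    exact h.trans (by gcongr; simpa [y] using hstep)
  have hlaplacian : |planeLaplacian φ y - planeLaplacian φ x| ≤ 2 * K * (Δt * R) :=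
    (norm_planeLaplacian_sub_le (hφ.of_le (by norm_num)) (hbd 3 (by norm_num)) x y).trans
      (by gcongr)
  change |_ - φ x - Δt * (σ ^ 2 / 2 * planeLaplacian φ x + _)| ≤ _
  calc _ = |(1 / 4 * ∑ ℓ, φ (y + s • eVec ℓ) - φ y - s ^ 2 / 4 * planeLaplacian φ y)
        + (φ y - φ x - Δt * fderiv ℝ φ x q)
        + Δt * (σ ^ 2 / 2) * (planeLaplacian φ y - planeLaplacian φ x)| := by
        rw [hs2]; ring_nf
    _ ≤ K * s ^ 4 / 6 + K * (Δt * R) ^ 2 + Δt * (σ ^ 2 / 2) * (2 * K * (Δt * R)) := by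
        refine (abs_add_three _ _ _).trans (add_le_add_three hdiffusion hdrift ?_)
        rw [abs_mul, abs_of_nonneg (by positivity)]
        gcongr
    _ = _ := by rw [show s ^ 4 = (s ^ 2) ^ 2 by ring, hs2]; ring

/-- Consistency estimate for the four-point quadrature approximating the
diffusion–advection generator: for a `C⁴` function `φ` with derivatives of order up to 4
bounded by `K`, the four-point average of φ at the characteristic feet equals
`φ(x) + Δt((σ²/2)Δφ(x) + q·∇φ(x))` up to an error `C·(Δt)²`. -/
theorem stmt_8 (σ R K : ℝ) (hσ : 0 < σ) (hR : 0 < R) (hK : 0 < K)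
    (φ : ℝ × ℝ → ℝ) (hφ : ContDiff ℝ 4 φ)
    (hbd : ∀ k : ℕ, k ≤ 4 → ∀ x : ℝ × ℝ, ‖iteratedFDeriv ℝ k φ x‖ ≤ K) :
    ∃ C > 0, ∀ (x q : ℝ × ℝ) (Δt : ℝ), ‖q‖ ≤ R → 0 < Δt → Δt ≤ 1 →
      |(1 / 4) * ∑ ℓ : Fin 4, φ (x + Δt • q + (Real.sqrt (2 * Δt) * σ) • eVec ℓ)
          - φ x
          - Δt * ((σ ^ 2 / 2) *
                (iteratedFDeriv ℝ 2 φ x ![(1, 0), (1, 0)] +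
                  iteratedFDeriv ℝ 2 φ x ![(0, 1), (0, 1)]) +
              fderiv ℝ φ x q)| ≤ C * Δt ^ 2 :=
  stmt_8_general σ R K hR hK φ hφ hbd
end
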